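/- Let {X_i : i ∈ I} be a family of Banach spaces and κ a cardinal. If the ℓ∞-sum (⊕_{i∈I} X_i)_{ℓ∞} has the κ-perfect Daugavet property, then every X_i has the κ-perfect Daugavet property. -/

import Mathlib

universe u

/-- A slice of the closed unit ball of `X`. -/
def ballSlice {X : Type u} [NormedAddCommGroup X] [NormedSpace ℝ X]
    (f : X →L[ℝ] ℝ) (a : ℝ) : Set X :=
  {x | ‖x‖ ≤ 1 ∧ ‖f‖ - a < f x}

/-- `X` has the `κ`-perfect Daugavet property. -/
def HasKPerfectDaugavet (X : Type u) [NormedAddCommGroup X] [NormedSpace ℝ X]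
    (κ : Cardinal.{u}) : Prop :=
  ∀ Y : Set X, Cardinal.mk Y ≤ κ → (∀ y ∈ Y, ‖y‖ = 1) →
    ∀ (f : X →L[ℝ] ℝ) (a : ℝ), 0 < a →
      ∃ x ∈ ballSlice f a, ∀ y ∈ Y, ‖y + x‖ = 2

instance : Fact ((1 : ENNReal) ≤ ⊤) := ⟨le_top⟩

section Aux

variable {I : Type u} (X : I → Type u)
  [∀ i, NormedAddCommGroup (X i)] [∀ i, NormedSpace ℝ (X i)]

open scoped Classical

/-- Norm of a single-coordinate element of the `ℓ∞`-sum. -/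
lemma norm_single_top (i : I) (x : X i) : ‖lp.single ⊤ i x‖ = ‖x‖ := by
  classical
  apply le_antisymm
  · apply lp.norm_le_of_forall_le (norm_nonneg x)
    intro j
    rcases eq_or_ne j i with rfl | hj
    · rw [lp.single_apply_self]
    · rw [lp.single_apply_ne _ _ _ hj]
      simpa using norm_nonneg x
  · have := lp.norm_apply_le_norm ENNReal.top_ne_zero (lp.single ⊤ i x) i
    rwa [lp.single_apply_self] at this

/-- The continuous linear evaluation map at coordinate `i`. -/
noncomputable def evalCLM (i : I) : lp X ⊤ →L[ℝ] X i :=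
  LinearMap.mkContinuous
    { toFun := fun g => g i
      map_add' := fun g h => by simp [lp.coeFn_add]
      map_smul' := fun c g => by simp [lp.coeFn_smul] }
    1 (fun g => by
      rw [one_mul]; exact lp.norm_apply_le_norm ENNReal.top_ne_zero g i)

lemma evalCLM_apply (i : I) (g : lp X ⊤) : evalCLM X i g = g i := rfl

end Aux

/-- If the `ℓ∞`-sum of a family of Banach spaces has the `κ`-perfect Daugavet property,
then every summand has the `κ`-perfect Daugavet property. -/
theorem lInftySum_kPerfectDaugavet {I : Type u} (X : I → Type u)
    [∀ i, NormedAddCommGroup (X i)] [∀ i, NormedSpace ℝ (X i)] [∀ i, CompleteSpace (X i)]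
    (κ : Cardinal.{u}) (h : HasKPerfectDaugavet (lp X ⊤) κ) :
    ∀ i, HasKPerfectDaugavet (X i) κ := by
  classical
  intro i Y hYκ hY1 f a ha
  set F : lp X ⊤ →L[ℝ] ℝ := f.comp (evalCLM X i) with hF
  have hFapp : ∀ g : lp X ⊤, F g = f (g i) := fun g => rfl
  have hFsingle : ∀ x : X i, F (lp.single ⊤ i x) = f x := by
    intro x
    rw [hFapp, lp.single_apply_self]
  have hFnorm : ‖F‖ = ‖f‖ := by
    apply le_antisymm
    · apply ContinuousLinearMap.opNorm_le_bound _ (norm_nonneg f)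
      intro g
      calc ‖F g‖ = ‖f (g i)‖ := by rw [hFapp]
        _ ≤ ‖f‖ * ‖g i‖ := f.le_opNorm _
        _ ≤ ‖f‖ * ‖g‖ := by
            gcongr
            exact lp.norm_apply_le_norm ENNReal.top_ne_zero g i
    · apply ContinuousLinearMap.opNorm_le_bound _ (norm_nonneg F)
      intro x
      calc ‖f x‖ = ‖F (lp.single ⊤ i x)‖ := by rw [hFsingle]
        _ ≤ ‖F‖ * ‖lp.single ⊤ i x‖ := F.le_opNorm _
        _ = ‖F‖ * ‖x‖ := by rw [norm_single_top]
  set Y' : Set (lp X ⊤) := (lp.single ⊤ i) '' Y with hY'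
  have hY'κ : Cardinal.mk Y' ≤ κ := le_trans Cardinal.mk_image_le hYκ
  have hY'1 : ∀ y ∈ Y', ‖y‖ = 1 := by
    rintro _ ⟨y, hy, rfl⟩
    rw [norm_single_top]
    exact hY1 y hy
  obtain ⟨g, ⟨hg1, hg2⟩, hg3⟩ := h Y' hY'κ hY'1 F a ha
  refine ⟨g i, ⟨(lp.norm_apply_le_norm ENNReal.top_ne_zero g i).trans hg1, ?_⟩, ?_⟩
  · rw [hFnorm, hFapp] at hg2
    exact hg2
  · intro y hy
    have h2 := hg3 _ (Set.mem_image_of_mem _ hy)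
    have hcoord : (lp.single ⊤ i y + g : lp X ⊤) i = y + g i := by
      rw [lp.coeFn_add, Pi.add_apply, lp.single_apply_self]
    apply le_antisymm
    · calc ‖y + g i‖ = ‖(lp.single ⊤ i y + g : lp X ⊤) i‖ := by rw [hcoord]
        _ ≤ ‖lp.single ⊤ i y + g‖ :=
            lp.norm_apply_le_norm ENNReal.top_ne_zero _ i
        _ = 2 := h2
    · have hb : ‖lp.single ⊤ i y + g‖ ≤ max ‖y + g i‖ 1 := by
        apply lp.norm_le_of_forall_le (le_max_of_le_right zero_le_one)
        intro j
        rcases eq_or_ne j i with rfl | hj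
        · rw [hcoord]; exact le_max_left _ _
        · have : (lp.single ⊤ i y + g : lp X ⊤) j = g j := by
            rw [lp.coeFn_add, Pi.add_apply, lp.single_apply_ne _ _ _ hj, zero_add]
          rw [this]
          exact le_max_of_le_right ((lp.norm_apply_le_norm ENNReal.top_ne_zero g j).trans hg1)
      rw [h2] at hb
      rcases le_max_iff.mp hb with h' | h'
      · exact h'
      · linarith
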